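/- arXiv:2203.10801 — 2 statements merged into one kernel-verified Lean document; each statement's English description precedes it below -/
import Mathlib

section
/- Let n ≥ 4 be even and let V = (Fin n → F₄), where F₄ = GaloisField 2 2 is the field with four elements, equipped with the Hermitian form B(x,y) = Σ_i x_i y_i². Then: (a) there exists an injective group homomorphism ψ from the symmetric group S_{n+2} to the group of linear automorphisms of V such that for every transposition τ ∈ S_{n+2}, ψ(τ) is a unitary transvection t_v for some nonzero singular vector v ∈ V; and (b) there is no injective group homomorphism from S_{n+3} to the linear automorphisms of V sending every transposition to a unitary transvection. (Equivalently, φ(U_n(2)) = n+2 for even n ≥ 4.) -/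
/-!
For even `n` the all-ones vector `𝟙` of `F₄^(n+2)` lies in the sum-zero hyperplane `W` and spans
the radical of the standard Hermitian form on `W`. So `S_(n+2)` acts on the `n`-dimensional heart
`W/⟨𝟙⟩` preserving the induced form, which a change of coordinates using `ω² + ω = 1` turns into
the standard one. The transposition `(a b)` acts as the transvection in the image of `e_a + e_b`,
and the action is faithful because `n + 2 ≥ 5`.

Conversely, let `S_(m+1)` embed with transpositions going to transvections, `t_(v_i)` being the
image of `(i m)`. These transpositions do not commute, so `B(v_i, v_j) ≠ 0`; and
`(i m)(j m)(i m) = (i j)` commutes with `(k m)`, while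
`t_(v_i) t_(v_j) t_(v_i) = t_(v_j + B(v_j, v_i) v_i)`, so `B(v_j, v_k) = B(v_j, v_i) B(v_i, v_k)`.
Rescaling the `v_i` then makes their Gram matrix `J - I`, which is invertible in characteristic 2
when `m` is even. Hence `m ≤ n`, which rules out `m = n + 2`.
-/

/-- The field with four elements. -/
abbrev F4 : Type := GaloisField 2 2

/-- The standard Hermitian form on `F₄ⁿ`: `B x y = ∑ i, x i * (y i)²`
(conjugation in `F₄` is `a ↦ a²`). -/
noncomputable def hermForm (n : ℕ) (x y : Fin n → F4) : F4 :=
  ∑ i : Fin n, x i * (y i) ^ 2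

open Finset

lemma CharTwo.even_nsmul_eq_zero {R : Type*} [Ring R] [CharP R 2] {k : ℕ} (hk : Even k) (a : R) :
    k • a = 0 := by
  obtain ⟨m, rfl⟩ := hk
  rw [add_nsmul, CharTwo.add_self_eq_zero]

namespace Equiv.Perm

variable {α : Type*} [Fintype α] [DecidableEq α]

lemma eq_one_of_forall_apply_mem_pair (hα : 3 ≤ Fintype.card α) {σ : Perm α}
    (h : ∀ a b, a ≠ b → σ a = a ∨ σ a = b) : σ = 1 := by
  ext a
  have : 1 < #(univ.erase a) := by rw [card_erase_of_mem (mem_univ a), card_univ]; omega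
  obtain ⟨b, hb, b', hb', hbb'⟩ := one_lt_card.mp this
  rw [mem_erase] at hb hb'
  rcases h a b hb.1.symm with h1 | h1
  · exact h1
  rcases h a b' hb'.1.symm with h2 | h2
  · exact h2
  exact absurd (h1.symm.trans h2) hbb'

lemma apply_mem_pair_of_forall_single_add_single {K : Type*} [AddGroupWithOne K] [NeZero (1 : K)]
    (hα : 4 < Fintype.card α) {σ : Perm α} {a b : α} (hab : a ≠ b) {c : K}
    (h : ∀ j, (Pi.single a 1 + Pi.single b 1 : α → K) (σ⁻¹ j)
      = (Pi.single a 1 + Pi.single b 1 : α → K) j + c) :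
    σ a = a ∨ σ a = b := by
  have hcard : #{a, b, σ a, σ b} < #(univ : Finset α) :=
    (card_le_four).trans_lt (by rwa [card_univ])
  obtain ⟨j, -, hj⟩ := exists_mem_notMem_of_card_lt_card hcard
  simp only [mem_insert, mem_singleton, not_or] at hj
  have hc : 0 = c := by
    simpa [Pi.single_apply, Equiv.symm_apply_eq, hj.1, hj.2.1, hj.2.2.1, hj.2.2.2] using h j
  by_contra! H
  have := h (σ a)
  simp [← hc, hab, H.1, H.2] at this

end Equiv.Perm

lemma LinearEquiv.function_commute_iff {R M : Type*} [Semiring R] [AddCommMonoid M] [Module R M]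
    {f g : M ≃ₗ[R] M} : Function.Commute ⇑f ⇑g ↔ Commute f g :=
  ⟨fun h => LinearEquiv.ext h, fun h x => LinearEquiv.congr_fun h x⟩

namespace PermutationHeart

variable {K : Type*} [CommRing K] {n : ℕ}

/- `Kⁿ` models the heart `W/⟨𝟙⟩`, `W` the sum-zero vectors of `K^(n+2)`: `extend` picks the
representative `(x, ∑ x, 0)` of a class, and `project` subtracts `z (last) • 𝟙` (in
characteristic 2, adds it) and forgets the last two coordinates. -/
def extend : (Fin n → K) →ₗ[K] (Fin (n + 2) → K) where
  toFun x := Fin.snoc (Fin.snoc x (∑ i, x i) : Fin (n + 1) → K) 0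
  map_add' x y := by
    ext j
    induction j using Fin.lastCases with
    | last => simp
    | cast j => induction j using Fin.lastCases <;> simp [sum_add_distrib]
  map_smul' c x := by
    ext j
    induction j using Fin.lastCases with
    | last => simp
    | cast j => induction j using Fin.lastCases <;> simp [mul_sum]

def project : (Fin (n + 2) → K) →ₗ[K] (Fin n → K) where
  toFun z i := z i.castSucc.castSucc + z (Fin.last (n + 1))
  map_add' z w := by ext i; simp only [Pi.add_apply]; ring
  map_smul' c z := by ext i; simp only [Pi.smul_apply, smul_eq_mul, RingHom.id_apply]; ring

lemma sum_univ_add_two (z : Fin (n + 2) → K) :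
    ∑ j, z j
      = ∑ i : Fin n, z i.castSucc.castSucc + z (Fin.last n).castSucc + z (Fin.last (n + 1)) := by
  rw [Fin.sum_univ_castSucc, Fin.sum_univ_castSucc]

@[simp] lemma extend_castSucc_castSucc (x : Fin n → K) (i : Fin n) :
    extend x i.castSucc.castSucc = x i := by
  simp [extend]

@[simp] lemma extend_castSucc_last (x : Fin n → K) : extend x (Fin.last n).castSucc = ∑ i, x i := by
  simp [extend]

@[simp] lemma extend_last (x : Fin n → K) : extend x (Fin.last (n + 1)) = 0 := by
  simp [extend]

@[simp] lemma project_apply (z : Fin (n + 2) → K) (i : Fin n) :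
    project z i = z i.castSucc.castSucc + z (Fin.last (n + 1)) := rfl

lemma project_extend (x : Fin n → K) : project (extend x) = x := by
  ext i; simp

lemma sum_funLeft_perm (σ : Equiv.Perm (Fin (n + 2))) (z : Fin (n + 2) → K) :
    ∑ j, LinearMap.funLeft K K ⇑σ z j = ∑ j, z j :=
  Equiv.sum_comp σ z

def heartEnd (σ : Equiv.Perm (Fin (n + 2))) : Module.End K (Fin n → K) :=
  project ∘ₗ LinearMap.funLeft K K ⇑σ⁻¹ ∘ₗ extend

lemma heartEnd_apply (σ : Equiv.Perm (Fin (n + 2))) (x : Fin n → K) :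
    heartEnd σ x = project (LinearMap.funLeft K K ⇑σ⁻¹ (extend x)) := rfl

lemma heartEnd_one : heartEnd 1 = (1 : Module.End K (Fin n → K)) :=
  LinearMap.ext project_extend

variable [CharP K 2]

lemma sum_single_add_single (a b : Fin (n + 2)) :
    ∑ j, (Pi.single a 1 + Pi.single b 1 : Fin (n + 2) → K) j = 0 := by
  simp [sum_add_distrib, CharTwo.add_self_eq_zero]

lemma sum_extend (x : Fin n → K) : ∑ j, extend x j = 0 := by
  simp [sum_univ_add_two, CharTwo.add_self_eq_zero]

lemma project_const (c : K) : project (fun _ => c : Fin (n + 2) → K) = 0 := by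
  ext i; simp [CharTwo.add_self_eq_zero]

lemma extend_project (hn : Even n) {z : Fin (n + 2) → K} (hz : ∑ j, z j = 0) :
    extend (project z) = z + fun _ => z (Fin.last (n + 1)) := by
  ext j
  induction j using Fin.lastCases with
  | last => simp [CharTwo.add_self_eq_zero]
  | cast j =>
    induction j using Fin.lastCases with
    | last =>
      rw [sum_univ_add_two] at hz
      simp only [extend_castSucc_last, project_apply, Pi.add_apply, sum_add_distrib, sum_const,
        card_univ, Fintype.card_fin, CharTwo.even_nsmul_eq_zero hn, add_zero]
      linear_combination
        hz - (z (Fin.last n).castSucc + z (Fin.last (n + 1))) * CharTwo.two_eq_zero (R := K)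
    | cast i => simp

lemma heartEnd_project (hn : Even n) (σ : Equiv.Perm (Fin (n + 2))) {z : Fin (n + 2) → K}
    (hz : ∑ j, z j = 0) : heartEnd σ (project z) = project (LinearMap.funLeft K K ⇑σ⁻¹ z) := by
  have hconst (c : K) : LinearMap.funLeft K K ⇑σ⁻¹ (fun _ => c) = fun _ => c := rfl
  rw [heartEnd_apply, extend_project hn hz, map_add, map_add, hconst, project_const, add_zero]

lemma heartEnd_mul (hn : Even n) (σ τ : Equiv.Perm (Fin (n + 2))) :
    heartEnd (σ * τ) = (heartEnd σ * heartEnd τ : Module.End K (Fin n → K)) := by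
  refine LinearMap.ext fun x => ?_
  have hz : ∑ j, LinearMap.funLeft K K ⇑τ⁻¹ (extend x) j = 0 := by
    rw [sum_funLeft_perm, sum_extend]
  rw [Module.End.mul_apply, heartEnd_apply τ, heartEnd_project hn σ hz, heartEnd_apply]
  rfl

def heartRep (hn : Even n) : Equiv.Perm (Fin (n + 2)) →* ((Fin n → K) ≃ₗ[K] (Fin n → K)) :=
  (LinearMap.GeneralLinearGroup.generalLinearEquiv K (Fin n → K)).toMonoidHom.comp
    (MonoidHom.toHomUnits ⟨⟨heartEnd, heartEnd_one⟩, heartEnd_mul hn⟩)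

lemma exists_const_of_heartEnd_eq_one (hn : Even n) {σ : Equiv.Perm (Fin (n + 2))}
    (h : heartEnd σ = (1 : Module.End K (Fin n → K))) {z : Fin (n + 2) → K} (hz : ∑ j, z j = 0) :
    ∃ c, ∀ j, z (σ⁻¹ j) = z j + c := by
  set w := LinearMap.funLeft K K ⇑σ⁻¹ z + z
  have hw : ∑ j, w j = 0 := by
    rw [Fintype.sum_congr _ _ fun j => Pi.add_apply _ _ j, sum_add_distrib, sum_funLeft_perm, hz,
      add_zero]
  have hproj : project (LinearMap.funLeft K K ⇑σ⁻¹ z) = project z := by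
    rw [← heartEnd_project hn σ hz, h, Module.End.one_apply]
  have hw0 : project w = 0 := by
    ext i
    rw [map_add, hproj, Pi.add_apply, CharTwo.add_self_eq_zero, Pi.zero_apply]
  refine ⟨w (Fin.last (n + 1)), fun j => ?_⟩
  have := congrFun (extend_project hn hw) j
  rw [hw0, map_zero, Pi.zero_apply, Pi.add_apply, eq_comm, CharTwo.add_eq_zero] at this
  exact (CharTwo.add_eq_iff_eq_add.mp this).trans (add_comm _ _)

lemma heartRep_injective (hn : Even n) (h3 : 3 ≤ n) :
    Function.Injective (heartRep (K := K) hn) := by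
  have := CharP.nontrivial_of_char_ne_one (R := K) (v := 2) (by norm_num)
  refine (injective_iff_map_eq_one _).mpr fun σ hσ => ?_
  have h1 : heartEnd σ = (1 : Module.End K (Fin n → K)) :=
    LinearMap.ext fun x => LinearEquiv.congr_fun hσ x
  refine Equiv.Perm.eq_one_of_forall_apply_mem_pair (by rw [Fintype.card_fin]; omega)
    fun a b hab => ?_
  obtain ⟨c, hc⟩ := exists_const_of_heartEnd_eq_one hn h1 (sum_single_add_single a b)
  exact Equiv.Perm.apply_mem_pair_of_forall_single_add_single (by rw [Fintype.card_fin]; omega)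
    hab hc

lemma funLeft_swap {α : Type*} [DecidableEq α] (z : α → K) {a b : α} (hab : a ≠ b) :
    LinearMap.funLeft K K ⇑(Equiv.swap a b) z
      = z + (z a + z b) • (Pi.single a 1 + Pi.single b 1) := by
  ext j
  by_cases hja : j = a
  · subst hja
    simp only [LinearMap.funLeft_apply, Equiv.swap_apply_left, Pi.add_apply, Pi.smul_apply,
      Pi.single_eq_same, Pi.single_eq_of_ne hab, smul_eq_mul]
    linear_combination -CharTwo.add_self_eq_zero (z j)
  by_cases hjb : j = b
  · subst hjb
    simp only [LinearMap.funLeft_apply, Equiv.swap_apply_right, Pi.add_apply, Pi.smul_apply,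
      Pi.single_eq_same, Pi.single_eq_of_ne hab.symm, smul_eq_mul]
    linear_combination -CharTwo.add_self_eq_zero (z j)
  simp [hja, hjb, Equiv.swap_apply_of_ne_of_ne]

lemma heartEnd_swap {a b : Fin (n + 2)} (hab : a ≠ b) (x : Fin n → K) :
    heartEnd (Equiv.swap a b) x
      = x + (extend x a + extend x b) • project (Pi.single a 1 + Pi.single b 1) := by
  rw [heartEnd_apply, Equiv.swap_inv, funLeft_swap _ hab, map_add, map_smul, project_extend]

end PermutationHeart

namespace F4

lemma natCard_eq : Nat.card F4 = 4 := GaloisField.card 2 2 (by norm_num)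

lemma pow_four (a : F4) : a ^ 4 = a := by
  have := Fintype.ofFinite F4
  rw [← natCard_eq, Nat.card_eq_fintype_card]
  exact FiniteField.pow_card a

lemma pow_three_eq_one {a : F4} (ha : a ≠ 0) : a ^ 3 = 1 := by
  have h : a * (a ^ 3 - 1) = 0 := by linear_combination pow_four a
  exact sub_eq_zero.mp ((mul_eq_zero.mp h).resolve_left ha)

lemma exists_sq_add_self_eq_one : ∃ ω : F4, ω ^ 2 + ω = 1 := by
  obtain ⟨ω, h0, h1⟩ : ∃ ω : F4, ω ≠ 0 ∧ ω ≠ 1 := by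
    by_contra! h
    have hsurj : Function.Surjective fun b : Bool => if b then (1 : F4) else 0 := fun ω => by
      by_cases h0 : ω = 0
      · exact ⟨false, by simp [h0]⟩
      · exact ⟨true, by simp [h ω h0]⟩
    have := Nat.card_le_card_of_surjective _ hsurj
    simp [natCard_eq] at this
  have h3 : (ω - 1) * (ω ^ 2 + ω + 1) = 0 := by linear_combination pow_three_eq_one h0
  have := (mul_eq_zero.mp h3).resolve_left (sub_ne_zero.mpr h1)
  exact ⟨ω, by linear_combination this - CharTwo.two_eq_zero (R := F4)⟩

noncomputable def ω : F4 := exists_sq_add_self_eq_one.choose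

lemma ω_sq_add_ω : ω ^ 2 + ω = 1 := exists_sq_add_self_eq_one.choose_spec

lemma exists_mul_sq_mul_eq_one {ι : Type*} [DecidableEq ι] (c : ι → ι → F4) (i₀ : ι)
    (hne : ∀ i j, i ≠ j → c i j ≠ 0) (hswap : ∀ i j, c j i = c i j ^ 2)
    (hrel : ∀ i j k, i ≠ j → i ≠ k → j ≠ k → c j k = c j i * c i k) :
    ∃ μ : ι → F4, ∀ j k, j ≠ k → μ j * μ k ^ 2 * c j k = 1 := by
  refine ⟨fun j => if j = i₀ then 1 else c i₀ j, fun j k hjk => ?_⟩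
  have h3 : ∀ j, j ≠ i₀ → c i₀ j ^ 3 = 1 := fun j hj => pow_three_eq_one (hne _ _ (Ne.symm hj))
  by_cases hj : j = i₀
  · subst hj
    simp only [if_pos, if_neg (Ne.symm hjk)]
    linear_combination h3 k (Ne.symm hjk)
  by_cases hk : k = i₀
  · subst hk
    simp only [if_pos, if_neg hjk, hswap k j]
    linear_combination h3 j hjk
  simp only [if_neg hj, if_neg hk, hrel i₀ j k (Ne.symm hj) (Ne.symm hk) hjk, hswap i₀ j]
  linear_combination c i₀ k ^ 3 * h3 j hj + h3 k hk

end F4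

section hermForm

variable {n : ℕ}

lemma hermForm_add_left (x y z : Fin n → F4) :
    hermForm n (x + y) z = hermForm n x z + hermForm n y z := by
  simp [hermForm, add_mul, sum_add_distrib]

lemma hermForm_smul_left (c : F4) (x y : Fin n → F4) :
    hermForm n (c • x) y = c * hermForm n x y := by
  simp [hermForm, mul_sum, mul_assoc]

lemma hermForm_add_right (x y z : Fin n → F4) :
    hermForm n x (y + z) = hermForm n x y + hermForm n x z := by
  simp [hermForm, CharTwo.add_sq, mul_add, sum_add_distrib]

lemma hermForm_smul_right (c : F4) (x y : Fin n → F4) :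
    hermForm n x (c • y) = c ^ 2 * hermForm n x y := by
  simp [hermForm, mul_pow, mul_sum, mul_left_comm]

lemma hermForm_swap (x y : Fin n → F4) : hermForm n y x = hermForm n x y ^ 2 := by
  simp only [hermForm, CharTwo.sum_sq, mul_pow, ← pow_mul]
  exact sum_congr rfl fun i _ => by rw [F4.pow_four, mul_comm]

lemma hermForm_sum_left {ι : Type*} (s : Finset ι) (x : ι → Fin n → F4) (y : Fin n → F4) :
    hermForm n (∑ j ∈ s, x j) y = ∑ j ∈ s, hermForm n (x j) y := by
  simp only [hermForm, Finset.sum_apply, sum_mul]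
  exact sum_comm

lemma hermForm_single_right (x : Fin n → F4) (a : Fin n) :
    hermForm n x (Pi.single a 1) = x a := by
  simp [hermForm, Pi.single_apply]

lemma hermForm_const_right (x : Fin n → F4) (c : F4) :
    hermForm n x (fun _ => c) = (∑ i, x i) * c ^ 2 := by
  simp [hermForm, sum_mul]

lemma exists_hermForm_ne_zero {v : Fin n → F4} (hv : v ≠ 0) : ∃ x, hermForm n x v ≠ 0 := by
  obtain ⟨i, hi⟩ := Function.ne_iff.mp hv
  exact ⟨Pi.single i 1, by simpa [hermForm_swap _ (Pi.single i 1), hermForm_single_right]⟩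

lemma hermForm_zero_left (y : Fin n → F4) : hermForm n 0 y = 0 := by
  simp [hermForm]

lemma linearIndependent_of_hermForm_eq_ite {ι : Type*} [Fintype ι] [DecidableEq ι]
    (hι : Even (Fintype.card ι)) (w : ι → Fin n → F4)
    (hw : ∀ j k, hermForm n (w j) (w k) = if j = k then 0 else 1) : LinearIndependent F4 w := by
  rw [Fintype.linearIndependent_iff]
  intro g hg
  have hgk : ∀ k, g k = ∑ j, g j := fun k => by
    have := congrArg (hermForm n · (w k)) hg
    simp only [hermForm_sum_left, hermForm_smul_left, hw, mul_ite, mul_zero, mul_one,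
      hermForm_zero_left] at this
    rw [sum_ite, sum_const_zero, zero_add, filter_ne', sum_erase_eq_sub (mem_univ _)] at this
    exact (sub_eq_zero.mp this).symm
  have hS : ∑ j, g j = 0 := by
    rw [sum_congr rfl fun k _ => hgk k, sum_const, card_univ, CharTwo.even_nsmul_eq_zero hι]
  exact fun k => (hgk k).trans hS

end hermForm

noncomputable def unitaryTransvection {n : ℕ} (v x : Fin n → F4) : Fin n → F4 :=
  x + hermForm n x v • v

local notation "t" => unitaryTransvection

section unitaryTransvection

variable {n : ℕ}

lemma unitaryTransvection_comp (v w : Fin n → F4) (x : Fin n → F4) :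
    t v (t w x)
      = x + hermForm n x w • w + (hermForm n x v + hermForm n x w * hermForm n w v) • v := by
  simp only [unitaryTransvection, hermForm_add_left, hermForm_smul_left]

lemma commute_unitaryTransvection {v w : Fin n → F4} (h : hermForm n v w = 0) :
    Function.Commute (t v) (t w) := by
  have h' : hermForm n w v = 0 := by rw [hermForm_swap, h, zero_pow two_ne_zero]
  intro x
  rw [unitaryTransvection_comp, unitaryTransvection_comp, h, h', mul_zero, mul_zero, add_zero,
    add_zero, add_right_comm]

lemma hermForm_eq_zero_of_commute {v w : Fin n → F4} (hw : hermForm n w w = 0) (hw0 : w ≠ 0)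
    (h : Function.Commute (t v) (t w)) : hermForm n w v = 0 := by
  by_contra hwv
  obtain ⟨x, hx⟩ := exists_hermForm_ne_zero hw0
  have key : (hermForm n x w * hermForm n w v) • v = (hermForm n x v * hermForm n v w) • w := by
    have := h x
    rw [unitaryTransvection_comp, unitaryTransvection_comp] at this
    funext i
    have := congrFun this i
    simp only [Pi.add_apply, Pi.smul_apply, smul_eq_mul] at this ⊢
    linear_combination this
  have hv : v = ((hermForm n x w * hermForm n w v)⁻¹ * (hermForm n x v * hermForm n v w)) • w := by
    rw [mul_smul, ← key, inv_smul_smul₀ (mul_ne_zero hx hwv)]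
  apply hwv
  rw [hv, hermForm_smul_right, hw, mul_zero]

lemma unitaryTransvection_conj {v w : Fin n → F4} (hv : hermForm n v v = 0)
    (hvw : hermForm n v w ≠ 0) :
    t v ∘ t w ∘ t v = t (w + hermForm n w v • v) := by
  have h3 := F4.pow_three_eq_one hvw
  funext x i
  simp only [Function.comp_apply, unitaryTransvection, hermForm_add_left, hermForm_add_right,
    hermForm_smul_left, hermForm_smul_right, hermForm_swap v w, hv, Pi.add_apply, Pi.smul_apply,
    smul_eq_mul]
  linear_combination (hermForm n x v * v i) * CharTwo.two_eq_zero (R := F4)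
    - (hermForm n x v * v i * hermForm n v w ^ 3) * h3
    - (hermForm n x v * w i * hermForm n v w) * h3

end unitaryTransvection

open PermutationHeart

section unitaryHeart

variable {n : ℕ}

/- In the coordinates of `PermutationHeart` the form of the heart is `B x y + (∑ x) (∑ y)²`
(`hermForm_extend`); `twist` carries it to `B`, using `ω² + ω = 1`. -/
noncomputable def twistLinear (n : ℕ) : Module.End F4 (Fin n → F4) where
  toFun x := x + fun _ => F4.ω * ∑ i, x i
  map_add' x y := by ext i; simp only [Pi.add_apply, sum_add_distrib]; ring
  map_smul' c x := by ext i; simp only [Pi.add_apply, Pi.smul_apply, smul_eq_mul, ← mul_sum,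
    RingHom.id_apply]; ring

lemma twistLinear_apply (x : Fin n → F4) (i : Fin n) :
    twistLinear n x i = x i + F4.ω * ∑ i, x i := rfl

lemma sum_twistLinear (hn : Even n) (x : Fin n → F4) : ∑ i, twistLinear n x i = ∑ i, x i := by
  simp [twistLinear_apply, sum_add_distrib, CharTwo.even_nsmul_eq_zero hn]

lemma twistLinear_involutive (hn : Even n) : Function.Involutive (twistLinear n) := fun x => by
  ext i
  rw [twistLinear_apply, sum_twistLinear hn, twistLinear_apply, add_assoc, CharTwo.add_self_eq_zero,
    add_zero]

noncomputable def twist (hn : Even n) : (Fin n → F4) ≃ₗ[F4] (Fin n → F4) :=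
  LinearEquiv.ofInvolutive (twistLinear n) (twistLinear_involutive hn)

lemma twist_twist (hn : Even n) (x : Fin n → F4) : twist hn (twist hn x) = x :=
  twistLinear_involutive hn x

lemma hermForm_extend (hn : Even n) (x y : Fin n → F4) :
    hermForm (n + 2) (extend x) (extend y) = hermForm n (twist hn x) (twist hn y) := by
  simp only [hermForm, sum_univ_add_two, extend_castSucc_castSucc, extend_castSucc_last,
    extend_last, twist, LinearEquiv.coe_ofInvolutive, twistLinear_apply, CharTwo.add_sq, mul_pow]
  simp only [add_mul, mul_add, sum_add_distrib, ← sum_mul, ← mul_sum, ← CharTwo.sum_sq, sum_const,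
    card_univ, Fintype.card_fin, CharTwo.even_nsmul_eq_zero hn]
  linear_combination -((∑ i, x i) * (∑ i, y i) ^ 2) * F4.ω_sq_add_ω

lemma hermForm_extend_project (hn : Even n) {z z' : Fin (n + 2) → F4} (hz : ∑ j, z j = 0)
    (hz' : ∑ j, z' j = 0) : hermForm (n + 2) z (extend (project z')) = hermForm (n + 2) z z' := by
  rw [extend_project hn hz', hermForm_add_right, hermForm_const_right, hz, zero_mul, add_zero]

noncomputable def unitaryHeartRep (hn : Even n) :
    Equiv.Perm (Fin (n + 2)) →* ((Fin n → F4) ≃ₗ[F4] (Fin n → F4)) :=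
  (MulAut.conj (twist hn)).toMonoidHom.comp (heartRep hn)

lemma unitaryHeartRep_injective (hn : Even n) (h3 : 3 ≤ n) :
    Function.Injective (unitaryHeartRep hn) :=
  (MulEquiv.injective (MulAut.conj (twist hn))).comp (heartRep_injective hn h3)

noncomputable def pairVector (hn : Even n) (a b : Fin (n + 2)) : Fin n → F4 :=
  twist hn (project (Pi.single a 1 + Pi.single b 1))

lemma unitaryHeartRep_apply (hn : Even n) (σ : Equiv.Perm (Fin (n + 2))) (x : Fin n → F4) :
    unitaryHeartRep hn σ x = twist hn (heartEnd σ (twist hn x)) := rfl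

lemma unitaryHeartRep_swap (hn : Even n) {a b : Fin (n + 2)} (hab : a ≠ b) :
    ⇑(unitaryHeartRep hn (Equiv.swap a b)) = t (pairVector hn a b) := by
  funext x
  set y := twist hn x
  have hcoef : hermForm n x (pairVector hn a b) = extend y a + extend y b :=
    calc hermForm n x (pairVector hn a b)
        = hermForm (n + 2) (extend y) (extend (project (Pi.single a 1 + Pi.single b 1))) := by
          rw [hermForm_extend hn, twist_twist]; rfl
      _ = hermForm (n + 2) (extend y) (Pi.single a 1 + Pi.single b 1) :=
          hermForm_extend_project hn (sum_extend y) (sum_single_add_single a b)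
      _ = extend y a + extend y b := by
          rw [hermForm_add_right, hermForm_single_right, hermForm_single_right]
  rw [unitaryHeartRep_apply, heartEnd_swap hab, map_add, map_smul, twist_twist, unitaryTransvection,
    hcoef]
  rfl

lemma hermForm_pairVector_self (hn : Even n) {a b : Fin (n + 2)} (hab : a ≠ b) :
    hermForm n (pairVector hn a b) (pairVector hn a b) = 0 := by
  have hs := sum_single_add_single (K := F4) a b
  rw [pairVector, ← hermForm_extend, hermForm_extend_project hn (sum_extend _) hs, hermForm_swap,
    hermForm_extend_project hn hs hs]
  simp [hermForm_add_right, hermForm_single_right, hab, Ne.symm hab, CharTwo.add_self_eq_zero]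

theorem exists_injective_perm_hom_unitaryTransvection (hn : Even n) (h3 : 3 ≤ n) :
    ∃ ψ : Equiv.Perm (Fin (n + 2)) →* ((Fin n → F4) ≃ₗ[F4] (Fin n → F4)),
      Function.Injective ψ ∧ ∀ τ : Equiv.Perm (Fin (n + 2)), τ.IsSwap →
        ∃ v : Fin n → F4, v ≠ 0 ∧ hermForm n v v = 0 ∧ ∀ w, (ψ τ) w = w + hermForm n w v • v := by
  refine ⟨unitaryHeartRep hn, unitaryHeartRep_injective hn h3, ?_⟩
  rintro _ ⟨a, b, hab, rfl⟩
  have hswap := unitaryHeartRep_swap hn hab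
  refine ⟨pairVector hn a b, fun h0 => hab ?_, hermForm_pairVector_self hn hab, congrFun hswap⟩
  have : unitaryHeartRep hn (Equiv.swap a b) = unitaryHeartRep hn 1 :=
    LinearEquiv.ext fun w => by simp [hswap, h0, unitaryTransvection]
  exact Equiv.swap_eq_one_iff.mp (unitaryHeartRep_injective hn h3 this)

end unitaryHeart

/- The hypotheses are the relations between the images of the transpositions `(i m)` of
`S_(m+1)`. -/
lemma le_of_unitaryTransvection_star_relations {n m : ℕ} (hm : Even m) (v : Fin m → Fin n → F4)
    (hv0 : ∀ i, v i ≠ 0) (hvs : ∀ i, hermForm n (v i) (v i) = 0)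
    (hnc : ∀ i j, i ≠ j → ¬ Function.Commute (t (v i)) (t (v j)))
    (hbraid : ∀ i j k, i ≠ j → i ≠ k → j ≠ k →
      Function.Commute (t (v i) ∘ t (v j) ∘ t (v i)) (t (v k))) :
    m ≤ n := by
  obtain _ | m := m
  · exact Nat.zero_le n
  have hne : ∀ i j, i ≠ j → hermForm n (v i) (v j) ≠ 0 := fun i j hij h =>
    hnc i j hij (commute_unitaryTransvection h)
  have hrel : ∀ i j k, i ≠ j → i ≠ k → j ≠ k →
      hermForm n (v j) (v k) = hermForm n (v j) (v i) * hermForm n (v i) (v k) := by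
    intro i j k hij hik hjk
    have h := hermForm_eq_zero_of_commute (hvs k) (hv0 k)
      (unitaryTransvection_conj (hvs i) (hne i j hij) ▸ hbraid i j k hij hik hjk)
    rw [hermForm_swap, hermForm_add_left, hermForm_smul_left, sq_eq_zero_iff,
      CharTwo.add_eq_zero] at h
    exact h
  obtain ⟨μ, hμ⟩ := F4.exists_mul_sq_mul_eq_one (fun i j => hermForm n (v i) (v j)) 0 hne
    (fun i j => hermForm_swap _ _) hrel
  have hind : LinearIndependent F4 fun j => μ j • v j := by
    refine linearIndependent_of_hermForm_eq_ite (by simpa using hm) _ fun j k => ?_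
    rw [hermForm_smul_left, hermForm_smul_right]
    split_ifs with hjk
    · rw [hjk, hvs, mul_zero, mul_zero]
    · rw [← mul_assoc, hμ j k hjk]
  simpa using hind.fintype_card_le_finrank

open Equiv in
lemma le_of_injective_perm_hom_unitaryTransvection {n m : ℕ} (hm : Even m)
    (ψ : Perm (Fin (m + 1)) →* ((Fin n → F4) ≃ₗ[F4] (Fin n → F4))) (hψ : Function.Injective ψ)
    (hswap : ∀ τ : Perm (Fin (m + 1)), τ.IsSwap →
      ∃ v : Fin n → F4, v ≠ 0 ∧ hermForm n v v = 0 ∧ ∀ w, (ψ τ) w = w + hermForm n w v • v) :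
    m ≤ n := by
  let s (i : Fin m) : Perm (Fin (m + 1)) := swap i.castSucc (Fin.last m)
  choose v hv0 hvs hv using fun i => hswap (s i) ⟨_, _, (Fin.castSucc_lt_last i).ne, rfl⟩
  have hψs : ∀ i, ⇑(ψ (s i)) = t (v i) := fun i => funext (hv i)
  have hcomm : ∀ σ τ, Function.Commute ⇑(ψ σ) ⇑(ψ τ) ↔ Commute σ τ := fun σ τ =>
    LinearEquiv.function_commute_iff.trans (commute_map_iff hψ)
  refine le_of_unitaryTransvection_star_relations hm v hv0 hvs (fun i j hij => ?_)
    (fun i j k hij hik hjk => ?_)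
  · rw [← hψs, ← hψs, hcomm]
    intro h
    have := congr($h j.castSucc)
    simp [s, Equiv.swap_apply_of_ne_of_ne, Ne.symm hij, (Fin.castSucc_lt_last _).ne] at this
  · have : ψ (s i) ∘ ψ (s j) ∘ ψ (s i) = ψ (s i * s j * s i) := by rw [map_mul, map_mul]; rfl
    rw [← hψs, ← hψs, ← hψs, this, hcomm]
    simp only [s, swap_comm i.castSucc]
    rw [swap_mul_swap_mul_swap (Fin.castSucc_lt_last j).ne (by simpa using hij.symm)]
    refine (Perm.disjoint_swap_swap ?_).commute
    simp [hij, hik, hjk, (Fin.castSucc_lt_last _).ne]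

/-- `φ(U_n(2)) = n + 2` for even `n ≥ 4`: the symmetric group `S (n+2)`
embeds into `U_n(2)` with all transpositions going to unitary transvections (in nonzero
singular vectors), while `S (n+3)` does not. -/
theorem phi_unitary_even (n : ℕ) (hn : 4 ≤ n) (heven : Even n) :
    (∃ ψ : Equiv.Perm (Fin (n + 2)) →* ((Fin n → F4) ≃ₗ[F4] (Fin n → F4)),
      Function.Injective ψ ∧
      ∀ τ : Equiv.Perm (Fin (n + 2)), τ.IsSwap →
        ∃ v : Fin n → F4, v ≠ 0 ∧ hermForm n v v = 0 ∧
          ∀ w, (ψ τ) w = w + hermForm n w v • v) ∧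
    ¬ (∃ ψ : Equiv.Perm (Fin (n + 3)) →* ((Fin n → F4) ≃ₗ[F4] (Fin n → F4)),
      Function.Injective ψ ∧
      ∀ τ : Equiv.Perm (Fin (n + 3)), τ.IsSwap →
        ∃ v : Fin n → F4, v ≠ 0 ∧ hermForm n v v = 0 ∧
          ∀ w, (ψ τ) w = w + hermForm n w v • v) := by
  refine ⟨exists_injective_perm_hom_unitaryTransvection heven (by omega), ?_⟩
  rintro ⟨ψ, hψ, hswap⟩
  have := le_of_injective_perm_hom_unitaryTransvection (heven.add even_two) ψ hψ hswap
  omega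
end

section
/- Let n ≥ 4 with n ≡ 1 (mod 3), and let V = (Fin n → ZMod 3) with the standard symmetric bilinear form B(x,y) = Σ_i x_i y_i (Gram determinant 1, i.e., type '+'). Then: (a) there exists an injective group homomorphism ψ from the symmetric group S_n to the group of linear automorphisms of V such that for every transposition τ ∈ S_n, ψ(τ) is a reflection t_v for some v ∈ V with B(v,v) = 2; and (b) there is no injective group homomorphism from S_{n+1} to the linear automorphisms of V sending every transposition to such a reflection. (Equivalently, φ(O_n^{+,+}(3)) = n when n ≡ 1 (mod 3).) -/
/-- The standard symmetric bilinear form on `(ZMod 3)^n`: `B x y = ∑ i, x i * y i`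
(Gram determinant `1`, type `+`). -/
def oForm (n : ℕ) (x y : Fin n → ZMod 3) : ZMod 3 :=
  ∑ i : Fin n, x i * y i

/-!
The permutation representation of `S_n` on `(ZMod 3)^n` sends the transposition `(a b)` to the
reflection in `e_a - e_b`, a vector of norm `2`.

Conversely, let `v_k` be the reflection vectors of the images of the adjacent transpositions
`(k, k+1)` of `S_{n+1}`. Distinct commuting reflections have orthogonal vectors, and reflections
in orthogonal vectors commute, so the braid relations force the Gram matrix of `v_1, …, v_n` to be
tridiagonal with `2` on the diagonal and nonzero (hence `±1`) entries next to it. Its determinant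
is therefore `n + 1 = 2` in `ZMod 3`. But it is also `det (v_i j)²`, and `2` is not a square
mod `3`.
-/

open Equiv Function

namespace Matrix

variable {R : Type*} [CommRing R]

/-- The shape of the Cartan matrix of type `A_m`, up to rescaling the basis vectors. -/
structure IsPathCartan {m : ℕ} (M : Matrix (Fin m) (Fin m) R) : Prop where
  diag : ∀ i, M i i = 2
  adj : ∀ i j : Fin m, (i : ℕ) + 1 = j → M i j * M j i = 1
  far : ∀ i j : Fin m, (i : ℕ) + 1 < j ∨ (j : ℕ) + 1 < i → M i j = 0

theorem det_succ_succ_of_sparse_corner {k : ℕ} (A : Matrix (Fin (k + 2)) (Fin (k + 2)) R)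
    (hcol : ∀ i : Fin k, A i.succ.succ 0 = 0) (hrow : ∀ j : Fin k, A 0 j.succ.succ = 0) :
    A.det = A 0 0 * (A.submatrix Fin.succ Fin.succ).det -
      A 0 1 * A 1 0 * ((A.submatrix Fin.succ Fin.succ).submatrix Fin.succ Fin.succ).det := by
  have hminor : (A.submatrix (Fin.succAbove 1) Fin.succ).det =
      A 0 1 * ((A.submatrix Fin.succ Fin.succ).submatrix Fin.succ Fin.succ).det := by
    rw [det_succ_row_zero, Fin.sum_univ_succ]
    simp only [submatrix_apply, Fin.one_succAbove_zero, hrow, mul_zero, zero_mul,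
      Finset.sum_const_zero, add_zero, Fin.succAbove_zero, Fin.succ_zero_eq_one, Fin.val_zero,
      pow_zero, one_mul]
    rfl
  rw [det_succ_column_zero, Fin.sum_univ_succ, Fin.sum_univ_succ]
  simp only [Fin.succ_zero_eq_one, hcol, mul_zero, zero_mul, Finset.sum_const_zero, add_zero,
    Fin.succAbove_zero, hminor, Fin.val_zero, Fin.val_one, pow_zero, pow_one, one_mul]
  ring

namespace IsPathCartan

theorem submatrix_succ {m : ℕ} {M : Matrix (Fin (m + 1)) (Fin (m + 1)) R}
    (hM : M.IsPathCartan) : (M.submatrix Fin.succ Fin.succ).IsPathCartan where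
  diag i := hM.diag i.succ
  adj i j h := hM.adj i.succ j.succ (by simpa using h)
  far i j h := hM.far i.succ j.succ (by simpa using h)

theorem det_eq : ∀ {m : ℕ} {M : Matrix (Fin m) (Fin m) R}, M.IsPathCartan → M.det = m + 1
  | 0, _, _ => by simp
  | 1, M, hM => by simp [hM.diag]; norm_num
  | k + 2, M, hM => by
    rw [det_succ_succ_of_sparse_corner M (fun i => hM.far _ _ (by simp))
      (fun j => hM.far _ _ (by simp)), hM.diag, det_eq hM.submatrix_succ,
      det_eq hM.submatrix_succ.submatrix_succ, hM.adj 0 1 rfl]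
    push_cast
    ring

end IsPathCartan

theorem det_of_dotProduct {ι : Type*} [Fintype ι] [DecidableEq ι] (v : ι → ι → R) :
    (of fun i j => v i ⬝ᵥ v j).det = (of v).det ^ 2 := by
  have h : of (fun i j => v i ⬝ᵥ v j) = of v * (of v)ᵀ := by ext; rfl
  rw [h, det_mul, det_transpose, sq]

end Matrix

section PermRep

variable (R ι : Type*) [CommRing R]

def permRep : Perm ι →* ((ι → R) ≃ₗ[R] (ι → R)) where
  toFun σ := LinearEquiv.funCongrLeft R R σ⁻¹
  map_one' := rfl
  map_mul' _ _ := rfl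

variable {R ι}

theorem permRep_apply (σ : Perm ι) (w : ι → R) (i : ι) :
    permRep R ι σ w i = w (σ⁻¹ i) :=
  rfl

theorem permRep_injective [Nontrivial R] [DecidableEq ι] : Injective (permRep R ι) := by
  refine (injective_iff_map_eq_one _).2 fun σ hσ => Equiv.ext fun i => ?_
  have h : permRep R ι σ (Pi.single i 1) (σ i) = (Pi.single i 1 : ι → R) (σ i) := by
    rw [hσ]; rfl
  rw [permRep_apply, ← Perm.mul_apply, inv_mul_cancel, Perm.one_apply, Pi.single_eq_same] at h
  by_contra hne
  exact one_ne_zero (h.trans (Pi.single_eq_of_ne hne 1))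

theorem permRep_swap_apply [Fintype ι] [DecidableEq ι] (a b : ι) (w : ι → R) :
    permRep R ι (swap a b) w =
      w - (w ⬝ᵥ (Pi.single a 1 - Pi.single b 1)) • (Pi.single a 1 - Pi.single b 1) := by
  ext i
  simp only [permRep_apply, swap_inv, dotProduct_sub, dotProduct_single, Pi.sub_apply,
    Pi.smul_apply, smul_eq_mul, Pi.single_apply]
  rcases eq_or_ne i a with rfl | hia
  · by_cases h : i = b <;> simp [h]
  rcases eq_or_ne i b with rfl | hib
  · simp [hia]
  · simp [hia, hib, swap_apply_of_ne_of_ne hia hib]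

theorem dotProduct_single_sub_single_self [Fintype ι] [DecidableEq ι] {a b : ι} (hab : a ≠ b) :
    (Pi.single a 1 - Pi.single b 1 : ι → R) ⬝ᵥ (Pi.single a 1 - Pi.single b 1) = 2 := by
  simp [dotProduct_sub, hab, hab.symm]
  norm_num

end PermRep

section Reflection

variable {K V : Type*} [AddCommGroup V]

def IsReflectionAlong [CommRing K] [Module K V] (B : LinearMap.BilinForm K V) (f : V ≃ₗ[K] V)
    (v : V) : Prop :=
  B v v = 2 ∧ ∀ w, f w = w - B w v • v

namespace IsReflectionAlong

section CommRing

variable [CommRing K] [Module K V] {B : LinearMap.BilinForm K V} {f g : V ≃ₗ[K] V} {u v : V}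

theorem mul_self (hf : IsReflectionAlong B f u) : f * f = 1 := by
  refine LinearEquiv.ext fun w => ?_
  show f (f w) = w
  simp only [hf.2, map_sub, map_smul, LinearMap.sub_apply, LinearMap.smul_apply, smul_eq_mul, hf.1]
  module

theorem commute_of_apply_eq_zero (hf : IsReflectionAlong B f u) (hg : IsReflectionAlong B g v)
    (huv : B u v = 0) (hvu : B v u = 0) : Commute f g := by
  refine LinearEquiv.ext fun w => ?_
  simp only [LinearEquiv.mul_apply, hf.2, hg.2, map_sub, map_smul, LinearMap.sub_apply,
    LinearMap.smul_apply, smul_eq_mul, huv, hvu, mul_zero, sub_zero]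
  module

theorem apply_ne_zero_of_orderOf_mul_eq_three {G : Type*} [Group G] {ψ : G →* (V ≃ₗ[K] V)}
    (hψ : Injective ψ) (hB : B.IsSymm) {s t : G} (hs : IsReflectionAlong B (ψ s) u)
    (ht : IsReflectionAlong B (ψ t) v) (hst : orderOf (s * t) = 3) : B u v ≠ 0 := by
  intro huv
  have hcomm := hs.commute_of_apply_eq_zero ht huv (hB.isRefl _ _ huv)
  have hsq : ψ (s * t) ^ 2 = 1 := by
    rw [map_mul, hcomm.mul_pow, sq, sq, hs.mul_self, ht.mul_self, one_mul]
  have hdvd := orderOf_dvd_of_pow_eq_one hsq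
  rw [orderOf_injective ψ hψ, hst] at hdvd
  norm_num at hdvd

end CommRing

theorem apply_eq_zero_of_commute [Field K] [Module K V] {B : LinearMap.BilinForm K V}
    {f g : V ≃ₗ[K] V} {u v : V} (h2 : (2 : K) ≠ 0) (hB : B.IsSymm)
    (hf : IsReflectionAlong B f u) (hg : IsReflectionAlong B g v) (hfg : Commute f g)
    (hne : f ≠ g) : B u v = 0 := by
  by_contra hc
  set c := B u v
  -- Comparing `f g u` with `g f u` gives `c • u = 2 • v`, and comparing norms then `c² = 4`.
  have hu : c • u = (2 : K) • v := by
    have h := congr($hfg u)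
    simp only [LinearEquiv.mul_apply, hf.2, hg.2, map_sub, map_smul, LinearMap.sub_apply,
      LinearMap.smul_apply, smul_eq_mul, hf.1, hB.eq v u] at h
    have h' : c • (c • u - (2 : K) • v) = 0 := by linear_combination (norm := module) h
    exact sub_eq_zero.1 ((smul_eq_zero.1 h').resolve_left hc)
  have hc2 : c ^ 2 = 4 := by
    have h := congr(B $hu $hu)
    simp only [map_smul, LinearMap.smul_apply, smul_eq_mul, hf.1, hg.1] at h
    have h' : (2 : K) * (c ^ 2 - 4) = 0 := by linear_combination h
    linear_combination (mul_eq_zero.1 h').resolve_left h2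
  have h4 : (4 : K) ≠ 0 := by
    rw [show (4 : K) = 2 * 2 by norm_num]
    exact mul_ne_zero h2 h2
  refine hne (LinearEquiv.ext fun w => ?_)
  rw [hf.2, hg.2]
  have h := congr(B w $hu • $hu)
  simp only [map_smul, smul_eq_mul] at h
  congr 1
  apply smul_right_injective V h4
  linear_combination (norm := module) h - hc2 • (B w u • u)

end IsReflectionAlong

end Reflection

section AdjSwap

variable {m : ℕ}

def adjSwap (k : Fin m) : Perm (Fin (m + 1)) := swap k.castSucc k.succ

theorem adjSwap_isSwap (k : Fin m) : (adjSwap k).IsSwap :=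
  ⟨_, _, Fin.castSucc_lt_succ.ne, rfl⟩

theorem adjSwap_injective : Injective (adjSwap (m := m)) := by
  intro i j h
  have h' := congr($h i.castSucc)
  simp only [adjSwap, swap_apply_left, swap_apply_def] at h'
  split_ifs at h' <;> simp only [Fin.ext_iff, Fin.val_succ, Fin.val_castSucc] at * <;> omega

theorem commute_adjSwap {i j : Fin m} (h : (i : ℕ) + 1 < j) : Commute (adjSwap i) (adjSwap j) :=
  (Perm.disjoint_swap_swap (by simp [Fin.ext_iff]; omega)).commute

theorem orderOf_adjSwap_mul_adjSwap {i j : Fin m} (h : (i : ℕ) + 1 = j) :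
    orderOf (adjSwap i * adjSwap j) = 3 := by
  have hij : i.succ = j.castSucc := Fin.ext (by simpa using h)
  rw [adjSwap, adjSwap, ← hij, swap_comm]
  exact (Perm.isThreeCycle_swap_mul_swap_same (by simp [Fin.ext_iff])
    (by simp [Fin.ext_iff]; omega) (by simp [Fin.ext_iff]; omega)).orderOf

end AdjSwap

theorem isPathCartan_gram_of_adjSwap {V : Type*} [AddCommGroup V] [Module (ZMod 3) V]
    {B : LinearMap.BilinForm (ZMod 3) V} (hB : B.IsSymm) {m : ℕ}
    {ψ : Perm (Fin (m + 1)) →* (V ≃ₗ[ZMod 3] V)} (hψ : Injective ψ) {v : Fin m → V}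
    (hv : ∀ k, IsReflectionAlong B (ψ (adjSwap k)) (v k)) :
    (Matrix.of fun i j => B (v i) (v j)).IsPathCartan where
  diag i := (hv i).1
  adj i j h := by
    have hc := (hv i).apply_ne_zero_of_orderOf_mul_eq_three hψ hB (hv j)
      (orderOf_adjSwap_mul_adjSwap h)
    rw [Matrix.of_apply, Matrix.of_apply, hB.eq (v j)]
    generalize B (v i) (v j) = c at hc ⊢
    revert c
    decide
  far i j h := by
    have hne : ψ (adjSwap i) ≠ ψ (adjSwap j) :=
      hψ.ne (adjSwap_injective.ne (by rintro rfl; omega))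
    rcases h with h | h
    · exact (hv i).apply_eq_zero_of_commute (by decide) hB (hv j) ((commute_adjSwap h).map ψ) hne
    · rw [Matrix.of_apply, hB.eq]
      exact (hv j).apply_eq_zero_of_commute (by decide) hB (hv i) ((commute_adjSwap h).map ψ)
        hne.symm

theorem phi_O_plus_plus_3_mod_one_general (n : ℕ) (hmod : n % 3 = 1) :
    (∃ ψ : Equiv.Perm (Fin (n)) →* ((Fin n → ZMod 3) ≃ₗ[ZMod 3] (Fin n → ZMod 3)),
      Function.Injective ψ ∧
      ∀ τ : Equiv.Perm (Fin (n)), τ.IsSwap →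
        ∃ v : Fin n → ZMod 3, oForm n v v = 2 ∧
          ∀ w, (ψ τ) w = w - oForm n w v • v) ∧
    ¬ (∃ ψ : Equiv.Perm (Fin (n + 1)) →* ((Fin n → ZMod 3) ≃ₗ[ZMod 3] (Fin n → ZMod 3)),
      Function.Injective ψ ∧
      ∀ τ : Equiv.Perm (Fin (n + 1)), τ.IsSwap →
        ∃ v : Fin n → ZMod 3, oForm n v v = 2 ∧
          ∀ w, (ψ τ) w = w - oForm n w v • v) := by
  refine ⟨⟨permRep (ZMod 3) (Fin n), permRep_injective, ?_⟩, ?_⟩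
  · rintro τ ⟨a, b, hab, rfl⟩
    exact ⟨_, dotProduct_single_sub_single_self hab, permRep_swap_apply a b⟩
  · rintro ⟨ψ, hψ, hrefl⟩
    choose v hv using fun k : Fin n => hrefl _ (adjSwap_isSwap k)
    have hB : LinearMap.BilinForm.IsSymm
        (dotProductBilin (ZMod 3) (ZMod 3) : LinearMap.BilinForm (ZMod 3) (Fin n → ZMod 3)) :=
      ⟨dotProduct_comm⟩
    have hdet := (isPathCartan_gram_of_adjSwap hB hψ hv).det_eq
    simp only [dotProductBilin_apply_apply, Matrix.det_of_dotProduct] at hdet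
    rw [← ZMod.natCast_mod, hmod] at hdet
    generalize (Matrix.of v).det = d at hdet
    revert d
    decide

/-- φ(O_n^{+,+}(3)) = n when n ≡ 1 (mod 3): S_n embeds with transpositions going to reflections t_v with B(v,v) = 2, while S_{n+1} does not. -/
theorem phi_O_plus_plus_3_mod_one (n : ℕ) (hn : 4 ≤ n) (hmod : n % 3 = 1) :
    (∃ ψ : Equiv.Perm (Fin (n)) →* ((Fin n → ZMod 3) ≃ₗ[ZMod 3] (Fin n → ZMod 3)),
      Function.Injective ψ ∧
      ∀ τ : Equiv.Perm (Fin (n)), τ.IsSwap →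
        ∃ v : Fin n → ZMod 3, oForm n v v = 2 ∧
          ∀ w, (ψ τ) w = w - oForm n w v • v) ∧
    ¬ (∃ ψ : Equiv.Perm (Fin (n + 1)) →* ((Fin n → ZMod 3) ≃ₗ[ZMod 3] (Fin n → ZMod 3)),
      Function.Injective ψ ∧
      ∀ τ : Equiv.Perm (Fin (n + 1)), τ.IsSwap →
        ∃ v : Fin n → ZMod 3, oForm n v v = 2 ∧
          ∀ w, (ψ τ) w = w - oForm n w v • v) :=
  phi_O_plus_plus_3_mod_one_general n hmod
end
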